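/- arXiv:1102.2955 — 2 statements merged into one kernel-verified Lean document; each statement's English description precedes it below -/
import Mathlib

section
/- (Hayashi–Nagaoka operator inequality) For positive semidefinite operators S and T on a finite-dimensional Hilbert space with 0 ≤ S ≤ I, the following operator inequality holds: I − (S+T)^{-1/2} S (S+T)^{-1/2} ≤ 2(I − S) + 4T, where (S+T)^{-1/2} denotes the square root of the generalized (Moore–Penrose) inverse of S+T. -/
open Matrix
open scoped ComplexOrder

/-- The Loewner order: `A ≤ B` iff `B - A` is positive semidefinite. -/
def Loewner {d : ℕ} (A B : Matrix (Fin d) (Fin d) ℂ) : Prop :=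
  (B - A).PosSemidef

/-- The square root of the Moore–Penrose (generalized) inverse of a Hermitian matrix:
apply the function `x ↦ 1/√x` (with value `0` at `0`) via the functional calculus. -/
noncomputable def pinvSqrt {d : ℕ} {A : Matrix (Fin d) (Fin d) ℂ}
    (hA : A.IsHermitian) : Matrix (Fin d) (Fin d) ℂ :=
  hA.cfc (fun x => if x = 0 then 0 else (Real.sqrt x)⁻¹)

/-!
Write `N = S + T`, `r = √N`, `f = N^{-1/2}` and `p = f r`, the support projection of `N`.
Then `1 - fSf = (1 - p) + fTf`, and splitting `p = r + (p - r)` in `fTf = p (fTf) p` gives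
`fTf ≤ 2 r (fTf) r + 2 (p - r) (fTf) (p - r) ≤ 2T + 2 (p - r)²`, because `r f T f r = pTp = T`
(`T ≤ N` lives on the support of `N`) and `fTf ≤ fNf = p`. Expanding `(p - r)² = p - 2r + N`
and using `p ≤ 1` yields `1 - fSf ≤ 2(1 - S) + 4T - 4(r - S)`, and `S ≤ r` since `S² ≤ S ≤ N`
and the square root is operator monotone.

Only the relations `frf = f`, `rfr = r` between the commuting self-adjoint elements `f` and `r`
enter, so the argument runs in any unital C⋆-algebra.
-/

open CFC

section StarOrderedRing
variable {R : Type*} [NonUnitalRing R] [PartialOrder R] [StarRing R] [StarOrderedRing R]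

theorem star_add_mul_add_le {k : R} (hk : 0 ≤ k) (x y : R) :
    star (x + y) * k * (x + y) ≤ 2 • (star x * k * x + star y * k * y) := by
  rw [← sub_nonneg]
  convert star_left_conjugate_nonneg hk (x - y) using 1
  simp only [star_add, star_sub]
  noncomm_ring

end StarOrderedRing

theorem isStarProjection_mul_of_mul_mul_eq {R : Type*} [Semiring R] [StarRing R] {f r : R}
    (hf : IsSelfAdjoint f) (hr : IsSelfAdjoint r) (hcomm : Commute f r) (hfrf : f * r * f = f) :
    IsStarProjection (f * r) := by
  refine ⟨show f * r * (f * r) = f * r by rw [← mul_assoc, hfrf], ?_⟩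
  rw [IsSelfAdjoint, star_mul, hr.star_eq, hf.star_eq, hcomm.eq]

namespace CStarAlgebra
variable {A : Type*} [CStarAlgebra A] [PartialOrder A] [StarOrderedRing A]

theorem le_sqrt_of_le_of_le_one {a b : A} (ha : 0 ≤ a) (ha1 : a ≤ 1) (hab : a ≤ b) :
    a ≤ sqrt b := by
  calc a = sqrt (a ^ 2) := (sqrt_sq a).symm
    _ ≤ sqrt b := sqrt_le_sqrt _ _ <| by
      calc a ^ 2 ≤ a ^ 1 := pow_antitone ha ha1 (by norm_num)
        _ = a := pow_one a
        _ ≤ b := hab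

theorem _root_.IsStarProjection.conjugate_eq_of_le {p a b : A} (hp : IsStarProjection p)
    (ha : 0 ≤ a) (hab : a ≤ b) (hbp : b * p = b) : p * a * p = a := by
  have hap : a * p = a := by
    suffices a * (1 - p) = 0 by rwa [mul_one_sub, sub_eq_zero, eq_comm] at this
    suffices sqrt a * (1 - p) = 0 by rw [← sqrt_mul_sqrt_self a, mul_assoc, this, mul_zero]
    rw [← CStarRing.star_mul_self_eq_zero_iff, star_mul, (sqrt_nonneg a).star_eq, mul_assoc,
      ← mul_assoc (sqrt a), sqrt_mul_sqrt_self a, ← mul_assoc]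
    refine le_antisymm ?_ (star_left_conjugate_nonneg ha _)
    calc star (1 - p) * a * (1 - p) ≤ star (1 - p) * b * (1 - p) :=
          star_left_conjugate_le_conjugate hab _
      _ = 0 := by rw [mul_assoc, mul_one_sub, hbp, sub_self, mul_zero]
  have hpa : p * a = a := by
    simpa [ha.star_eq, hp.isSelfAdjoint.star_eq] using congr(star $hap)
  rw [hpa, hap]

theorem hayashi_nagaoka_of_generalized_inverse {s t r f : A} (hs : 0 ≤ s) (ht : 0 ≤ t)
    (hr : IsSelfAdjoint r) (hrr : r * r = s + t) (hsr : s ≤ r) (hf : IsSelfAdjoint f)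
    (hcomm : Commute f r) (hfrf : f * r * f = f) (hrfr : r * f * r = r) :
    1 - f * s * f ≤ 2 • (1 - s) + 4 • t := by
  have hp := isStarProjection_mul_of_mul_mul_eq hf hr hcomm hfrf
  generalize hfr : f * r = p at hp
  have hrf : r * f = p := hcomm.eq ▸ hfr
  have hpr : p * r = r := by rw [← hrf, hrfr]
  have hrp : r * p = r := by rw [← hfr, ← mul_assoc, hrfr]
  have hpf : p * f = f := by rw [← hfr, hfrf]
  have hfp : f * p = f := by rw [← hrf, ← mul_assoc, hfrf]
  have hfNf : f * (s + t) * f = p := by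
    rw [← hrr, ← hp.isIdempotentElem.eq, ← mul_assoc, hfr, mul_assoc, hrf]
  have htp : p * t * p = t :=
    hp.conjugate_eq_of_le ht (le_add_of_nonneg_left hs) (by rw [← hrr, mul_assoc, hrp])
  have hk : 0 ≤ f * t * f := by simpa [hf.star_eq] using star_left_conjugate_nonneg ht f
  have hkp : f * t * f ≤ p := by
    rw [← hfNf, ← sub_nonneg, mul_add, add_mul, add_sub_cancel_right]
    simpa [hf.star_eq] using star_left_conjugate_nonneg hs f
  have hrkr : star r * (f * t * f) * r = t := by
    rw [hr.star_eq, show r * (f * t * f) * r = (r * f) * t * (f * r) by noncomm_ring, hrf, hfr, htp]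
  have hepe : star (p - r) * p * (p - r) = p - 2 • r + (s + t) := by
    rw [star_sub, hp.isSelfAdjoint.star_eq, hr.star_eq, sub_mul p r p, hp.isIdempotentElem.eq, hrp,
      sub_mul, mul_sub, mul_sub, hp.isIdempotentElem.eq, hpr, hrp, hrr]
    abel
  calc 1 - f * s * f = (1 - p) + f * t * f := by rw [← hfNf]; noncomm_ring
    _ = (1 - p) + star (r + (p - r)) * (f * t * f) * (r + (p - r)) := by
      rw [add_sub_cancel, hp.isSelfAdjoint.star_eq,
        show p * (f * t * f) * p = (p * f) * t * (f * p) by noncomm_ring, hpf, hfp]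
    _ ≤ (1 - p) + 2 • (star r * (f * t * f) * r + star (p - r) * (f * t * f) * (p - r)) := by
      gcongr; exact star_add_mul_add_le hk _ _
    _ ≤ (1 - p) + 2 • (t + star (p - r) * p * (p - r)) := by
      rw [hrkr]; gcongr; exact star_left_conjugate_le_conjugate hkp _
    _ = 1 + p + 2 • (s + t) + 2 • t - 4 • r := by rw [hepe]; noncomm_ring
    _ ≤ 1 + 1 + 2 • (s + t) + 2 • t - 4 • r := by gcongr; exact hp.le_one
    _ = 2 • (1 - s) + 4 • t - 4 • (r - s) := by noncomm_ring
    _ ≤ 2 • (1 - s) + 4 • t := sub_le_self _ (nsmul_nonneg (sub_nonneg.2 hsr) 4)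

end CStarAlgebra

open scoped MatrixOrder Matrix.Norms.L2Operator

namespace Matrix

variable {n : Type*} [Fintype n] [DecidableEq n]

theorem continuousOn_spectrum (g : ℝ → ℝ) (A : Matrix n n ℂ) : ContinuousOn g (spectrum ℝ A) :=
  (spectrum ℝ A).toFinite.continuousOn g

theorem cfc_mul_cfc_mul_cfc (g h k : ℝ → ℝ) (A : Matrix n n ℂ) :
    cfc g A * cfc h A * cfc k A = cfc (fun x => g x * h x * k x) A := by
  rw [← cfc_mul g h A (continuousOn_spectrum _ _) (continuousOn_spectrum _ _),
    ← cfc_mul _ k A (continuousOn_spectrum _ _) (continuousOn_spectrum _ _)]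

variable {A : Matrix n n ℂ} (hA : 0 ≤ A)
include hA

theorem commute_cfc_inv_sqrt_sqrt : Commute (cfc (fun x => (√x)⁻¹) A) (CFC.sqrt A) := by
  rw [CFC.sqrt_eq_real_sqrt A hA, cfcₙ_eq_cfc]
  exact cfc_commute_cfc _ _ A

theorem cfc_inv_sqrt_mul_sqrt_mul_cfc_inv_sqrt :
    cfc (fun x => (√x)⁻¹) A * CFC.sqrt A * cfc (fun x => (√x)⁻¹) A = cfc (fun x => (√x)⁻¹) A := by
  rw [CFC.sqrt_eq_real_sqrt A hA, cfcₙ_eq_cfc, cfc_mul_cfc_mul_cfc]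
  congr 1 with x
  simpa using mul_inv_mul_cancel (√x)⁻¹

theorem sqrt_mul_cfc_inv_sqrt_mul_sqrt :
    CFC.sqrt A * cfc (fun x => (√x)⁻¹) A * CFC.sqrt A = CFC.sqrt A := by
  rw [CFC.sqrt_eq_real_sqrt A hA, cfcₙ_eq_cfc, cfc_mul_cfc_mul_cfc]
  congr 1 with x
  exact mul_inv_mul_cancel √x

end Matrix

/-- The case split in `pinvSqrt` is vacuous: `(√x)⁻¹` is already `0` for `x ≤ 0`, as `0⁻¹ = 0`. -/
theorem pinvSqrt_eq_cfc {d : ℕ} {A : Matrix (Fin d) (Fin d) ℂ} (hA : A.IsHermitian) :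
    pinvSqrt hA = cfc (fun x => (√x)⁻¹) A := by
  rw [pinvSqrt, ← hA.cfc_eq]
  congr 1 with x
  split_ifs with h <;> simp [h]

/-- Hayashi–Nagaoka operator inequality: for `0 ≤ S ≤ I` and `0 ≤ T`,
`I − (S+T)^{-1/2} S (S+T)^{-1/2} ≤ 2(I − S) + 4T`. -/
theorem hayashi_nagaoka {d : ℕ} (S T : Matrix (Fin d) (Fin d) ℂ)
    (hS : S.PosSemidef) (hSI : Loewner S 1) (hT : T.PosSemidef)
    (hST : (S + T).IsHermitian) :
    Loewner (1 - pinvSqrt hST * S * pinvSqrt hST)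
      ((2 : ℝ) • (1 - S) + (4 : ℝ) • T) := by
  have hS0 : 0 ≤ S := hS.nonneg
  have hT0 : 0 ≤ T := hT.nonneg
  have hN : 0 ≤ S + T := add_nonneg hS0 hT0
  rw [Loewner, ← Matrix.le_iff, ofNat_smul_eq_nsmul (R := ℝ) 2, ofNat_smul_eq_nsmul (R := ℝ) 4,
    pinvSqrt_eq_cfc]
  exact CStarAlgebra.hayashi_nagaoka_of_generalized_inverse hS0 hT0 (CFC.sqrt_nonneg _).isSelfAdjoint
    (CFC.sqrt_mul_sqrt_self _ hN) (CStarAlgebra.le_sqrt_of_le_of_le_one hS0 hSI (le_add_of_nonneg_right hT0))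
    (cfc_predicate _ _) (Matrix.commute_cfc_inv_sqrt_sqrt hN)
    (Matrix.cfc_inv_sqrt_mul_sqrt_mul_cfc_inv_sqrt hN) (Matrix.sqrt_mul_cfc_inv_sqrt_mul_sqrt hN)
end

section
/- (Gentle Measurement Lemma) Let ρ be a density operator and Λ an operator with 0 ≤ Λ ≤ I on a finite-dimensional Hilbert space such that Tr{Λρ} ≥ 1 − ε for some ε ∈ [0,1]. Then ‖√Λ ρ √Λ − ρ‖₁ ≤ 2√ε. -/
open Matrix
open scoped ComplexOrder

/-- The positive semidefinite square root of a positive semidefinite matrix -/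
noncomputable def Matrix.PosSemidef.sqrt {n 𝕜 : Type*} [Fintype n] [DecidableEq n] [RCLike 𝕜]
    {A : Matrix n n 𝕜} (hA : A.PosSemidef) : Matrix n n 𝕜 :=
  hA.1.eigenvectorUnitary.1 * diagonal ((↑) ∘ (√·) ∘ hA.1.eigenvalues) *
  (star hA.1.eigenvectorUnitary : Matrix n n 𝕜)

/-- The trace norm `‖A‖₁ = Tr √(AᴴA)` of a complex matrix. -/
noncomputable def traceNorm {d : ℕ} (A : Matrix (Fin d) (Fin d) ℂ) : ℝ :=
  ((Matrix.posSemidef_conjTranspose_mul_self A).sqrt.trace).re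

/-!
Write `s = √Λ`, `r = √ρ` and `M = sρs − ρ`. As `M` is Hermitian, `‖M‖₁ = Re Tr(W M)` for the
unitary `W = sign M`. The factorisation `M = (s r)(r (s − 1)) + ((s − 1) r) r` and the
Cauchy–Schwarz inequality for the Hilbert–Schmidt inner product give
`‖M‖₁ ≤ (√Tr(Λρ) + 1) · √Tr((1 − s)² ρ)`. Finally `0 ≤ s ≤ 1` gives `(1 − s)² ≤ 1 − s² = 1 − Λ`,
hence `Tr((1 − s)² ρ) ≤ 1 − Tr(Λρ) ≤ ε`, while `Tr(Λρ) ≤ Tr ρ = 1`.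
-/

open scoped MatrixOrder

section CFCOrder

variable {A : Type*} [Ring A] [StarRing A] [TopologicalSpace A] [Algebra ℝ A]
  [ContinuousFunctionalCalculus ℝ A IsSelfAdjoint] [PartialOrder A] [StarOrderedRing A]
  [NonnegSpectrumClass ℝ A]

lemma mul_self_le_self_of_mul_self_le_one {s : A} (hs : 0 ≤ s) (h : s * s ≤ 1) : s * s ≤ s := by
  have hsa : IsSelfAdjoint s := .of_nonneg hs
  have hsq : cfc (fun x : ℝ => x * x) s = s * s := by
    rw [cfc_mul (fun x : ℝ => x) (fun x : ℝ => x) s, cfc_id' ℝ s]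
  rw [← hsq, cfc_le_one_iff (fun x : ℝ => x * x) s] at h
  conv_rhs => rw [← cfc_id' ℝ s]
  rw [← hsq, cfc_le_iff (fun x : ℝ => x * x) (fun x : ℝ => x) s]
  intro x hx
  have := spectrum_nonneg_of_nonneg hs hx
  nlinarith [h x hx]

lemma one_sub_mul_one_sub_le {s : A} (hs : 0 ≤ s) (h : s * s ≤ 1) :
    (1 - s) * (1 - s) ≤ 1 - s * s := by
  have hgap := sub_nonneg.mpr (mul_self_le_self_of_mul_self_le_one hs h)
  have e : (1 - s * s) - (1 - s) * (1 - s) = (s - s * s) + (s - s * s) := by noncomm_ring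
  rw [← sub_nonneg, e]
  exact add_nonneg hgap hgap

end CFCOrder

namespace Matrix

variable {n 𝕜 : Type*} [Fintype n] [DecidableEq n] [RCLike 𝕜]

lemma PosSemidef.sqrt_eq_cfcSqrt {A : Matrix n n 𝕜} (hA : A.PosSemidef) :
    hA.sqrt = CFC.sqrt A := by
  rw [CFC.sqrt_eq_cfc, cfc_nnreal_eq_real _ A, hA.1.cfc_eq, IsHermitian.cfc,
    Unitary.conjStarAlgAut_apply, PosSemidef.sqrt]
  congr 3
  funext x
  simp only [Function.comp_apply, Real.sqrt]

lemma IsHermitian.exists_unitary_abs_eq_mul {M : Matrix n n 𝕜} (hM : M.IsHermitian) :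
    ∃ W ∈ unitary (Matrix n n 𝕜), CFC.abs M = W * M := by
  have hsa : IsSelfAdjoint M := hM
  let sign : ℝ → ℝ := fun x => if x < 0 then -1 else 1
  have hcont : ContinuousOn sign (spectrum ℝ M) := M.finite_real_spectrum.continuousOn _
  refine ⟨cfc sign M, ?_, ?_⟩
  · rw [cfc_unitary_iff sign M]
    intro x _
    by_cases hx : x < 0 <;> simp [sign, hx]
  · have hmul : cfc sign M * M = cfc (fun x => sign x * x) M := by
      rw [cfc_mul sign (fun x => x) M, cfc_id' ℝ M]
    rw [CFC.abs_eq_cfc_norm M, hmul]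
    refine cfc_congr fun x _ => ?_
    by_cases hx : x < 0
    · simp [sign, hx, abs_of_neg hx]
    · simp [sign, hx, abs_of_nonneg (not_lt.mp hx)]

lemma trace_mul_nonneg {A B : Matrix n n 𝕜} (hA : 0 ≤ A) (hB : 0 ≤ B) : 0 ≤ (A * B).trace := by
  have hconj : 0 ≤ CFC.sqrt A * B * CFC.sqrt A := conjugate_nonneg_of_nonneg hB (CFC.sqrt_nonneg A)
  rw [← CFC.sqrt_mul_sqrt_self A hA, mul_assoc, trace_mul_comm]
  exact (nonneg_iff_posSemidef.mp hconj).trace_nonneg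

lemma re_trace_mul_le_re_trace_mul {A B ρ : Matrix n n 𝕜} (hAB : A ≤ B) (hρ : 0 ≤ ρ) :
    RCLike.re (A * ρ).trace ≤ RCLike.re (B * ρ).trace := by
  have := (RCLike.nonneg_iff.mp (trace_mul_nonneg (sub_nonneg.mpr hAB) hρ)).1
  rwa [sub_mul, trace_sub, map_sub, sub_nonneg] at this

/-- Cauchy–Schwarz for the inner product `⟪A, B⟫ = Tr (B Aᴴ)` that the identity matrix induces. -/
lemma re_trace_mul_le_sqrt_mul_sqrt (X Y : Matrix n n 𝕜) :
    RCLike.re (X * Y).trace ≤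
      √(RCLike.re (X * Xᴴ).trace) * √(RCLike.re (Yᴴ * Y).trace) := by
  let _ := toMatrixSeminormedAddCommGroup (1 : Matrix n n 𝕜) PosSemidef.one
  let _ := toMatrixInnerProductSpace (1 : Matrix n n 𝕜) PosSemidef.one
  have hinner (A B : Matrix n n 𝕜) : inner 𝕜 A B = (B * Aᴴ).trace := by
    change (B * 1 * Aᴴ).trace = _
    rw [mul_one]
  have := re_inner_le_norm (𝕜 := 𝕜) Xᴴ Y
  rwa [norm_eq_sqrt_re_inner (𝕜 := 𝕜), norm_eq_sqrt_re_inner (𝕜 := 𝕜), hinner, hinner, hinner,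
    conjTranspose_conjTranspose, trace_mul_comm, trace_mul_comm Xᴴ, trace_mul_comm Y] at this

lemma re_trace_unitary_mul_le_sqrt_mul_sqrt {W : Matrix n n 𝕜}
    (hW : W ∈ unitary (Matrix n n 𝕜)) (X Y : Matrix n n 𝕜) :
    RCLike.re (W * (X * Y)).trace ≤
      √(RCLike.re (X * Xᴴ).trace) * √(RCLike.re (Yᴴ * Y).trace) := by
  have hWX : (W * X) * (W * X)ᴴ = W * (X * Xᴴ) * star W := by
    rw [conjTranspose_mul, star_eq_conjTranspose]; noncomm_ring
  have := re_trace_mul_le_sqrt_mul_sqrt (W * X) Y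
  rw [← mul_assoc]
  rwa [hWX, trace_mul_cycle W (X * Xᴴ), Unitary.star_mul_self_of_mem hW, one_mul] at this

lemma re_trace_unitary_mul_conj_sub_le {W ρ s : Matrix n n 𝕜} (hW : W ∈ unitary (Matrix n n 𝕜))
    (hρ : 0 ≤ ρ) (hs : s.IsHermitian) :
    RCLike.re (W * (s * ρ * s - ρ)).trace ≤
      (√(RCLike.re (s * s * ρ).trace) + √(RCLike.re ρ.trace)) *
        √(RCLike.re ((1 - s) * (1 - s) * ρ).trace) := by
  set r := CFC.sqrt ρ
  have hr : r.IsHermitian := (nonneg_iff_posSemidef.mp (CFC.sqrt_nonneg ρ)).isHermitian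
  have hrr : r * r = ρ := CFC.sqrt_mul_sqrt_self ρ hρ
  have hdecomp : s * ρ * s - ρ = (s * r) * (r * (s - 1)) + ((s - 1) * r) * r := by
    rw [← hrr]; noncomm_ring
  have hsr : (s * r) * (s * r)ᴴ = s * ρ * s := by
    rw [conjTranspose_mul, hs.eq, hr.eq, ← hrr]; noncomm_ring
  have hrs : (r * (s - 1))ᴴ * (r * (s - 1)) = (1 - s) * ρ * (1 - s) := by
    rw [conjTranspose_mul, conjTranspose_sub, conjTranspose_one, hs.eq, hr.eq, ← hrr]
    noncomm_ring
  have hsr' : ((s - 1) * r) * ((s - 1) * r)ᴴ = (1 - s) * ρ * (1 - s) := by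
    rw [conjTranspose_mul, conjTranspose_sub, conjTranspose_one, hs.eq, hr.eq, ← hrr]
    noncomm_ring
  have h₁ := re_trace_unitary_mul_le_sqrt_mul_sqrt hW (s * r) (r * (s - 1))
  have h₂ := re_trace_unitary_mul_le_sqrt_mul_sqrt hW ((s - 1) * r) r
  rw [hsr, hrs, trace_mul_cycle s ρ s, trace_mul_cycle (1 - s) ρ (1 - s)] at h₁
  rw [hsr', trace_mul_cycle (1 - s) ρ (1 - s), hr.eq, hrr] at h₂
  rw [hdecomp, mul_add, trace_add, map_add]
  linarith

lemma re_trace_one_sub_mul_one_sub_mul_le {s ρ : Matrix n n 𝕜} (hs : 0 ≤ s) (hs₁ : s * s ≤ 1)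
    (hρ : 0 ≤ ρ) :
    RCLike.re ((1 - s) * (1 - s) * ρ).trace ≤
      RCLike.re ρ.trace - RCLike.re (s * s * ρ).trace := by
  have := re_trace_mul_le_re_trace_mul (one_sub_mul_one_sub_le hs hs₁) hρ
  rwa [sub_mul 1 (s * s) ρ, one_mul, trace_sub, map_sub] at this

end Matrix

lemma traceNorm_eq_re_trace_abs {d : ℕ} (M : Matrix (Fin d) (Fin d) ℂ) :
    traceNorm M = (CFC.abs M).trace.re := by
  rw [traceNorm, PosSemidef.sqrt_eq_cfcSqrt, CFC.abs, star_eq_conjTranspose]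

lemma traceNorm_conj_sub_le {d : ℕ} {ρ s : Matrix (Fin d) (Fin d) ℂ} (hρ : 0 ≤ ρ)
    (hs : s.IsHermitian) :
    traceNorm (s * ρ * s - ρ) ≤
      (√(s * s * ρ).trace.re + √ρ.trace.re) * √((1 - s) * (1 - s) * ρ).trace.re := by
  have hρH : ρ.IsHermitian := (nonneg_iff_posSemidef.mp hρ).isHermitian
  have hM : (s * ρ * s - ρ).IsHermitian := by
    simpa only [hs.eq] using (isHermitian_mul_mul_conjTranspose s hρH).sub hρH
  obtain ⟨W, hW, habs⟩ := hM.exists_unitary_abs_eq_mul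
  rw [traceNorm_eq_re_trace_abs, habs]
  exact re_trace_unitary_mul_conj_sub_le hW hρ hs

theorem gentle_measurement_general {d : ℕ} (ρ Λ : Matrix (Fin d) (Fin d) ℂ) (ε : ℝ)
    (hρ : ρ.PosSemidef) (hρtr : ρ.trace = 1)
    (hΛ : Λ.PosSemidef) (hΛI : Loewner Λ 1)
    (hsucc : 1 - ε ≤ ((Λ * ρ).trace).re) :
    traceNorm (hΛ.sqrt * ρ * hΛ.sqrt - ρ) ≤ 2 * Real.sqrt ε := by
  have hρ₀ : 0 ≤ ρ := nonneg_iff_posSemidef.mpr hρ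
  set s := hΛ.sqrt
  have hs_eq : s = CFC.sqrt Λ := hΛ.sqrt_eq_cfcSqrt
  have hs₀ : 0 ≤ s := hs_eq ▸ CFC.sqrt_nonneg Λ
  have hss : s * s = Λ := hs_eq ▸ CFC.sqrt_mul_sqrt_self Λ (nonneg_iff_posSemidef.mpr hΛ)
  have htr : ρ.trace.re = 1 := by rw [hρtr, Complex.one_re]
  have hdefect : ((1 - s) * (1 - s) * ρ).trace.re ≤ ρ.trace.re - (s * s * ρ).trace.re :=
    re_trace_one_sub_mul_one_sub_mul_le hs₀ (hss ▸ hΛI) hρ₀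
  have hΛρ : (Λ * ρ).trace.re ≤ 1 := by
    simpa [htr] using re_trace_mul_le_re_trace_mul (show Λ ≤ 1 from hΛI) hρ₀
  calc traceNorm (s * ρ * s - ρ)
      ≤ (√(s * s * ρ).trace.re + √ρ.trace.re) * √((1 - s) * (1 - s) * ρ).trace.re :=
        traceNorm_conj_sub_le hρ₀ (nonneg_iff_posSemidef.mp hs₀).isHermitian
    _ ≤ (1 + 1) * √ε := by
        rw [hss, htr, Real.sqrt_one]
        gcongr
        · exact Real.sqrt_le_one.mpr hΛρ
        · rw [hss, htr] at hdefect
          linarith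
    _ = 2 * √ε := by ring

/-- Gentle Measurement Lemma: if `0 ≤ Λ ≤ I` and `Tr{Λρ} ≥ 1 − ε` for a density operator `ρ`,
then `‖√Λ ρ √Λ − ρ‖₁ ≤ 2√ε`. -/
theorem gentle_measurement {d : ℕ} (ρ Λ : Matrix (Fin d) (Fin d) ℂ) (ε : ℝ)
    (hρ : ρ.PosSemidef) (hρtr : ρ.trace = 1)
    (hΛ : Λ.PosSemidef) (hΛI : Loewner Λ 1)
    (hε : 0 ≤ ε) (hε1 : ε ≤ 1)
    (hsucc : 1 - ε ≤ ((Λ * ρ).trace).re) :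
    traceNorm (hΛ.sqrt * ρ * hΛ.sqrt - ρ) ≤ 2 * Real.sqrt ε :=
  gentle_measurement_general ρ Λ ε hρ hρtr hΛ hΛI hsucc
end
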